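/- Let M̃ be an Ã-lattice. Suppose that for every n ≥ 0 the natural map (Fⁿ·M̃ + πM̃)/(Fⁿ⁺¹·M̃ + πM̃) → (rad̃ⁿM̃ + πM̃)/(rad̃ⁿ⁺¹M̃ + πM̃), induced by the inclusions Fⁿ·M̃ ⊆ rad̃ⁿM̃, is an isomorphism. Then M̃ is tight, i.e. Fⁿ·M̃ = rad̃ⁿM̃ for all n ≥ 0. -/

import Mathlib

set_option linter.unusedSectionVars false

/-!
Context: `O` is a DVR with uniformizer `π`, fraction field `K`.  `B` plays the role of
`Ã_K = K ⊗_O Ã` (finite-dimensional `K`-algebra), `A ⊆ B` the `O`-order playing the role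
of `Ã`, `V` the role of `M̃_K`, and the lattice `M̃` is an `A`-stable `O`-submodule
`L ⊆ V`, finite and free over `O`, spanning `V` over `K`.  `J` is the Jacobson radical of
`B`, `rad̃ⁿ M̃ := M̃ ∩ Jⁿ·M̃_K`, and `Fⁿ := Ã ∩ Jⁿ`.

STATEMENT: if for every `n ≥ 0` the natural map
`(Fⁿ·M̃ + πM̃)/(Fⁿ⁺¹·M̃ + πM̃) → (rad̃ⁿM̃ + πM̃)/(rad̃ⁿ⁺¹M̃ + πM̃)` induced by the inclusions
`Fⁿ·M̃ ⊆ rad̃ⁿM̃` is an isomorphism (bijective), then `M̃` is tight, i.e.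
`Fⁿ·M̃ = rad̃ⁿM̃` for all `n ≥ 0`.
-/

open Submodule

section

variable (O : Type) [CommRing O] [IsDomain O] [IsDiscreteValuationRing O]
variable (K : Type) [Field K] [Algebra O K] [IsFractionRing O K]
variable (B : Type) [Ring B] [Algebra K B] [Algebra O B] [IsScalarTower O K B]
  [FiniteDimensional K B]
variable (V : Type) [AddCommGroup V] [Module K V] [Module B V] [IsScalarTower K B V]
  [Module O V] [IsScalarTower O K V] [FiniteDimensional K V]

/-- The `R`-span of the set of products `s • w`, `s ∈ S`, `w ∈ W`. -/
noncomputable def sspan (R : Type) {B' V' : Type} [Semiring R] [AddCommMonoid V'] [Module R V']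
    [SMul B' V'] (S : Set B') (W : Set V') : Submodule R V' :=
  Submodule.span R {y : V' | ∃ s ∈ S, ∃ w ∈ W, y = s • w}

/-- The Jacobson radical `J` of `B = Ã_K`, viewed as a `K`-submodule of `B`. -/
noncomputable def JK : Submodule K B :=
  Submodule.restrictScalars K (Ideal.jacobson (⊥ : Ideal B))

/-- `Jⁿ·M̃_K`, i.e. `Jⁿ·V`. -/
noncomputable def radV (n : ℕ) : Submodule K V :=
  sspan K ((JK K B ^ n : Submodule K B) : Set B) (Set.univ : Set V)

/-- `rad̃ⁿ M̃ := M̃ ∩ Jⁿ·M̃_K`, an `O`-submodule of `V`. -/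
noncomputable def radL (L : Submodule O V) (n : ℕ) : Submodule O V :=
  L ⊓ Submodule.restrictScalars O (radV K B V n)

/-- `Fⁿ := Ã ∩ Jⁿ`, an `O`-submodule of `B`. -/
noncomputable def Fn (A : Subalgebra O B) (n : ℕ) : Submodule O B :=
  A.toSubmodule ⊓ Submodule.restrictScalars O (JK K B ^ n)

/-- `Fⁿ·M̃`, an `O`-submodule of `V`. -/
noncomputable def FnL (A : Subalgebra O B) (L : Submodule O V) (n : ℕ) : Submodule O V :=
  sspan O ((Fn O K B A n : Submodule O B) : Set B) ((L : Submodule O V) : Set V)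

theorem FnL_le_radL (A : Subalgebra O B) (L : Submodule O V)
    (hLstab : ∀ a ∈ A, ∀ x ∈ L, a • x ∈ L) (n : ℕ) :
    FnL O K B V A L n ≤ radL O K B V L n := by
  apply Submodule.span_le.mpr
  rintro y ⟨a, ha, x, hx, rfl⟩
  obtain ⟨ha1, ha2⟩ := Submodule.mem_inf.mp ha
  exact ⟨hLstab a ha1 x hx, Submodule.subset_span ⟨a, ha2, x, trivial, rfl⟩⟩

/-- `π·W`, the image of a submodule `W ⊆ V` under multiplication by `π`. -/
noncomputable def piSMul (π : O) (W : Submodule O V) : Submodule O V :=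
  Submodule.map (LinearMap.lsmul O V π) W

/-- The natural map between subquotients induced by inclusions `p ≤ r`, `p ⊓ q ≤ s`. -/
noncomputable def subQuotMap (p r q s : Submodule O V) (hpr : p ≤ r) (hqs : p ⊓ q ≤ s) :
    (↥p ⧸ (Submodule.comap p.subtype q)) →ₗ[O] (↥r ⧸ (Submodule.comap r.subtype s)) :=
  Submodule.mapQ _ _ (Submodule.inclusion hpr) (by
    intro x hx
    have : (x : V) ∈ s := hqs ⟨x.2, hx⟩
    simpa using this)

/-- The natural map `(Fⁿ·M̃ + πM̃)/(Fⁿ⁺¹·M̃ + πM̃) → (rad̃ⁿM̃ + πM̃)/(rad̃ⁿ⁺¹M̃ + πM̃)`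
induced by the inclusions `Fⁿ·M̃ ⊆ rad̃ⁿM̃` and `Fⁿ⁺¹·M̃ ⊆ rad̃ⁿ⁺¹M̃`. -/
noncomputable def modPiMap (π : O) (A : Subalgebra O B) (L : Submodule O V)
    (hLstab : ∀ a ∈ A, ∀ x ∈ L, a • x ∈ L) (n : ℕ) :
    (↥(FnL O K B V A L n ⊔ piSMul O V π L) ⧸
        (Submodule.comap (FnL O K B V A L n ⊔ piSMul O V π L).subtype
          (FnL O K B V A L (n + 1) ⊔ piSMul O V π L))) →ₗ[O]
      (↥(radL O K B V L n ⊔ piSMul O V π L) ⧸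
        (Submodule.comap (radL O K B V L n ⊔ piSMul O V π L).subtype
          (radL O K B V L (n + 1) ⊔ piSMul O V π L))) :=
  subQuotMap O V _ _ _ _
    (sup_le_sup_right (FnL_le_radL O K B V A L hLstab n) _)
    (inf_le_right.trans (sup_le_sup_right (FnL_le_radL O K B V A L hLstab (n + 1)) _))

/-! ### Auxiliary lemmas -/

lemma jac_mul_right {x : B} (hx : x ∈ Ideal.jacobson (⊥ : Ideal B)) (r : B) :
    x * r ∈ Ideal.jacobson (⊥ : Ideal B) := by
  rw [Ideal.mem_jacobson_iff] at hx ⊢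
  intro y
  obtain ⟨z, hz⟩ := hx (r * y)
  rw [Ideal.mem_bot] at hz
  have h1 : z * (r * y) * x + z = 1 := by rwa [sub_eq_zero] at hz
  refine ⟨1 - y * x * z * r, ?_⟩
  rw [Ideal.mem_bot]
  have key : y * x * (z * (r * y) * x + z) * r = y * x * 1 * r := by rw [h1]
  calc (1 - y * x * z * r) * y * (x * r) + (1 - y * x * z * r) - 1
      = y * x * r - y * x * (z * (r * y) * x + z) * r := by noncomm_ring
    _ = y * x * r - y * x * 1 * r := by rw [key]
    _ = 0 := by noncomm_ring

lemma JK_mul_left (n : ℕ) (b : B) {x : B} (hx : x ∈ (JK K B) ^ (n + 1)) :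
    b * x ∈ (JK K B) ^ (n + 1) := by
  rw [pow_succ'] at hx ⊢
  refine Submodule.mul_induction_on hx (fun m hm p hp => ?_) (fun u v hu hv => ?_)
  · rw [← mul_assoc]
    exact Submodule.mul_mem_mul (Ideal.mul_mem_left _ b hm) hp
  · rw [mul_add]
    exact add_mem hu hv

lemma JK_pow_succ_le (n : ℕ) : (JK K B) ^ (n + 2) ≤ (JK K B) ^ (n + 1) := by
  rw [show n + 2 = (n + 1) + 1 from rfl, pow_succ']
  exact Submodule.mul_le.mpr (fun a _ y hy => JK_mul_left K B n a hy)

lemma JK_pow_add_le (n k : ℕ) : (JK K B) ^ (n + 1 + k) ≤ (JK K B) ^ (n + 1) := by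
  induction k with
  | zero => exact le_rfl
  | succ k ih =>
      have h := JK_pow_succ_le K B (n + k)
      rw [show n + k + 2 = n + 1 + (k + 1) by omega, show n + k + 1 = n + 1 + k by omega] at h
      exact h.trans ih

lemma JK_descent (P : Submodule K B) (hP : JK K B * P = P) :
    ∀ (k : ℕ) (x : Fin k → B), (∀ i, x i ∈ P) →
      ((P : Set B) ⊆ (Submodule.span B (Set.range x) : Set B)) → P = ⊥ := by
  intro k
  induction k with
  | zero =>
      intro x _ hsub
      rw [eq_bot_iff]
      intro p hp
      have h := hsub hp
      rw [Set.range_eq_empty, Submodule.span_empty] at h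
      simpa using h
  | succ k ih =>
      intro x hxP hsub
      set T : Submodule K B :=
        { carrier := {b | ∃ d : Fin (k + 1) → B, (∀ i, d i ∈ JK K B) ∧ b = ∑ i, d i * x i}
          add_mem' := by
            rintro a b ⟨d, hd, rfl⟩ ⟨e, he, rfl⟩
            exact ⟨d + e, fun i => add_mem (hd i) (he i), by
              rw [← Finset.sum_add_distrib]
              exact Finset.sum_congr rfl fun i _ => (add_mul _ _ _).symm⟩
          zero_mem' := ⟨0, fun i => zero_mem _, by simp⟩
          smul_mem' := by
            rintro c b ⟨d, hd, rfl⟩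
            exact ⟨c • d, fun i => Submodule.smul_mem _ c (hd i), by
              rw [Finset.smul_sum]
              exact Finset.sum_congr rfl fun i _ => by
                rw [Pi.smul_apply, smul_mul_assoc]⟩ } with hT
      have hPT : P ≤ T := by
        conv_lhs => rw [← hP]
        refine Submodule.mul_le.mpr (fun a ha p hp => ?_)
        obtain ⟨c, hc⟩ := mem_span_range_iff_exists_fun B |>.mp (hsub hp)
        refine ⟨fun i => a * c i, fun i => jac_mul_right B ha (c i), ?_⟩
        rw [← hc, Finset.mul_sum]
        exact Finset.sum_congr rfl fun i _ => by rw [smul_eq_mul, mul_assoc]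
      obtain ⟨d, hd, hsum⟩ := hPT (hxP (Fin.last k))
      obtain ⟨z, hz⟩ := Ideal.mem_jacobson_iff.mp (hd (Fin.last k)) (-1)
      rw [Ideal.mem_bot] at hz
      have hz0 : z * (-1) * d (Fin.last k) + z = 1 := by rwa [sub_eq_zero] at hz
      have hz1 : z - z * d (Fin.last k) = 1 := by
        calc z - z * d (Fin.last k) = z * (-1) * d (Fin.last k) + z := by noncomm_ring
          _ = 1 := hz0
      set S : B := ∑ i ∈ Finset.univ.erase (Fin.last k), d i * x i with hS
      have hsum2 : x (Fin.last k) = d (Fin.last k) * x (Fin.last k) + S := by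
        rw [hS]
        rw [Finset.add_sum_erase _ (fun i => d i * x i) (Finset.mem_univ (Fin.last k))]
        exact hsum
      have hS' : x (Fin.last k) - d (Fin.last k) * x (Fin.last k) = S :=
        sub_eq_of_eq_add' hsum2
      have hxS : x (Fin.last k) = z * S := by
        calc x (Fin.last k) = (z - z * d (Fin.last k)) * x (Fin.last k) := by
              rw [hz1, one_mul]
          _ = z * (x (Fin.last k) - d (Fin.last k) * x (Fin.last k)) := by noncomm_ring
          _ = z * S := by rw [hS']
      have hxlast_mem :
          x (Fin.last k) ∈ Submodule.span B (Set.range (x ∘ Fin.castSucc)) := by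
        rw [hxS]
        have hSmem : S ∈ Submodule.span B (Set.range (x ∘ Fin.castSucc)) := by
          refine Submodule.sum_mem _ (fun i hi => ?_)
          obtain ⟨j, rfl⟩ :=
            Fin.exists_castSucc_eq.mpr (Finset.ne_of_mem_erase hi)
          rw [← smul_eq_mul]
          exact Submodule.smul_mem _ _ (Submodule.subset_span ⟨j, rfl⟩)
        rw [← smul_eq_mul]
        exact Submodule.smul_mem _ _ hSmem
      have hsub' : (P : Set B) ⊆
          (Submodule.span B (Set.range (x ∘ Fin.castSucc)) : Set B) := by
        intro p hp
        have h3 : Set.range x ⊆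
            (Submodule.span B (Set.range (x ∘ Fin.castSucc)) : Set B) := by
          rintro _ ⟨i, rfl⟩
          rcases eq_or_ne i (Fin.last k) with rfl | hne
          · exact hxlast_mem
          · obtain ⟨j, rfl⟩ := Fin.exists_castSucc_eq.mpr hne
            exact Submodule.subset_span ⟨j, rfl⟩
        exact Submodule.span_le.mpr h3 (hsub hp)
      exact ih (x ∘ Fin.castSucc) (fun i => hxP _) hsub'

lemma JK_nilpotent : ∃ N : ℕ, (JK K B) ^ (N + 1) = ⊥ := by
  obtain ⟨n, hn⟩ := IsArtinian.monotone_stabilizes (R := K) (M := B)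
    ⟨fun m => OrderDual.toDual ((JK K B) ^ (m + 1)), by
      intro m m' h
      obtain ⟨c, rfl⟩ := Nat.le.dest h
      have := JK_pow_add_le K B m c
      rw [show m + 1 + c = m + c + 1 by omega] at this
      exact this⟩
  refine ⟨n, ?_⟩
  have hst : (JK K B) ^ (n + 1) = (JK K B) ^ (n + 1 + 1) :=
    congrArg OrderDual.ofDual (hn (n + 1) (Nat.le_succ n))
  have hP : JK K B * (JK K B) ^ (n + 1) = (JK K B) ^ (n + 1) := by
    rw [← pow_succ']
    exact hst.symm
  obtain ⟨k, s, hs⟩ := Submodule.fg_iff_exists_fin_generating_family.mp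
    (IsNoetherian.noetherian ((JK K B) ^ (n + 1)))
  refine JK_descent K B _ hP k s (fun i => hs ▸ Submodule.subset_span (Set.mem_range_self i))
    (fun p hp => ?_)
  rw [← hs] at hp
  exact Submodule.span_subset_span K B _ hp

lemma radV_zero_eq_top : radV K B V 0 = ⊤ := by
  rw [eq_top_iff]
  intro v _
  refine Submodule.subset_span ⟨1, ?_, v, trivial, (one_smul B v).symm⟩
  rw [pow_zero, Submodule.one_eq_span]
  exact Submodule.subset_span rfl

lemma radV_succ_le (n : ℕ) : radV K B V (n + 1) ≤ radV K B V n := by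
  cases n with
  | zero => rw [radV_zero_eq_top]; exact le_top
  | succ n =>
      refine Submodule.span_mono ?_
      rintro y ⟨s, hs, w, hw, rfl⟩
      exact ⟨s, JK_pow_succ_le K B n hs, w, hw, rfl⟩

lemma radV_add_le (n k : ℕ) : radV K B V (n + k) ≤ radV K B V n := by
  induction k with
  | zero => exact le_rfl
  | succ k ih => exact (radV_succ_le K B V (n + k)).trans ih

/-- Nakayama over `O`. -/
lemma nakayama {O' V' : Type} [CommRing O'] [IsLocalRing O'] [AddCommGroup V'] [Module O' V']
    (π : O') (hπ : Irreducible π) (W₁ W₂ : Submodule O' V') (hle : W₁ ≤ W₂) (hfg : W₂.FG)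
    (h : ∀ x ∈ W₂, ∃ f ∈ W₁, ∃ y ∈ W₂, x = f + π • y) : W₂ ≤ W₁ := by
  have hfin : Module.Finite O' ↥W₂ := Module.Finite.iff_fg.mpr hfg
  have htop : (⊤ : Submodule O' (↥W₂ ⧸ Submodule.comap W₂.subtype W₁)).FG :=
    Module.finite_def.mp inferInstance
  have hIN : (⊤ : Submodule O' (↥W₂ ⧸ Submodule.comap W₂.subtype W₁)) ≤
      (Ideal.span {π}) • ⊤ := by
    intro q _
    obtain ⟨w, rfl⟩ := Submodule.Quotient.mk_surjective _ q
    obtain ⟨f, hf, y, hy, hxy⟩ := h w.1 w.2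
    have key : (Submodule.Quotient.mk w : ↥W₂ ⧸ Submodule.comap W₂.subtype W₁) =
        π • Submodule.Quotient.mk ⟨y, hy⟩ := by
      rw [← Submodule.Quotient.mk_smul, Submodule.Quotient.eq, Submodule.mem_comap]
      have he : (W₂.subtype) (w - π • (⟨y, hy⟩ : ↥W₂)) = f := by
        simp only [LinearMap.map_sub, Submodule.coe_subtype, LinearMap.map_smul]
        rw [show ((w : V') = f + π • y) from hxy]
        simp
      rw [he]
      exact hf
    rw [key]
    exact Submodule.smul_mem_smul (Ideal.subset_span rfl) trivial
  have hjac : (Ideal.span {π} : Ideal O') ≤ Ideal.jacobson ⊥ := by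
    rw [IsLocalRing.jacobson_eq_maximalIdeal ⊥ bot_ne_top]
    exact Ideal.span_le.mpr (Set.singleton_subset_iff.mpr
      ((IsLocalRing.mem_maximalIdeal π).mpr hπ.not_isUnit))
  have hbot := Submodule.eq_bot_of_le_smul_of_le_jacobson_bot (Ideal.span {π}) ⊤ htop hIN hjac
  intro x hx
  have hx0 : (Submodule.Quotient.mk (⟨x, hx⟩ : ↥W₂) :
      ↥W₂ ⧸ Submodule.comap W₂.subtype W₁) = 0 := by
    rw [← Submodule.mem_bot (R := O'), ← hbot]
    trivial
  have hmem := (Submodule.Quotient.mk_eq_zero (Submodule.comap W₂.subtype W₁)).mp hx0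
  simpa using hmem

theorem statement5 (π : O) (hπ : Irreducible π)
    (A : Subalgebra O B) (hAfin : Module.Finite O A) (hAfree : Module.Free O A)
    (hAspan : Submodule.span K (A : Set B) = ⊤)
    (L : Submodule O V) (hLfin : Module.Finite O L) (hLfree : Module.Free O L)
    (hLspan : Submodule.span K (L : Set V) = ⊤)
    (hLstab : ∀ a ∈ A, ∀ x ∈ L, a • x ∈ L)
    (hbij : ∀ n : ℕ, Function.Bijective (modPiMap O K B V π A L hLstab n)) :
    ∀ n : ℕ, FnL O K B V A L n = radL O K B V L n := by
  classical
  -- basic facts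
  have hradL_le_L : ∀ n, radL O K B V L n ≤ L := fun n => inf_le_left
  have hradL_succ_le : ∀ n, radL O K B V L (n + 1) ≤ radL O K B V L n := fun n =>
    inf_le_inf le_rfl (fun v hv => radV_succ_le K B V n hv)
  -- finite generation of radL n
  have hNoeth : IsNoetherian O ↥L :=
    isNoetherian_of_fg_of_noetherian _ (Module.Finite.iff_fg.mp hLfin)
  have hradfg : ∀ n, (radL O K B V L n).FG := by
    intro n
    have h1 : (Submodule.comap L.subtype (radL O K B V L n)).FG := IsNoetherian.noetherian _
    have h2 := h1.map L.subtype
    rwa [Submodule.map_comap_subtype, inf_eq_right.mpr (hradL_le_L n)] at h2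
  -- the case n = 0
  have hradL0 : radL O K B V L 0 = L := by
    rw [radL, radV_zero_eq_top]
    simp
  have hzero : FnL O K B V A L 0 = radL O K B V L 0 := by
    refine le_antisymm (FnL_le_radL O K B V A L hLstab 0) ?_
    rw [hradL0]
    intro x hx
    refine Submodule.subset_span ⟨1, Submodule.mem_inf.mpr ⟨?_, ?_⟩, x, hx,
      (one_smul B x).symm⟩
    · exact A.one_mem
    · show (1 : B) ∈ (JK K B) ^ 0
      rw [pow_zero, Submodule.one_eq_span]
      exact Submodule.subset_span rfl
  -- the inductive step
  have hstep : ∀ n : ℕ, FnL O K B V A L (n + 1) = radL O K B V L (n + 1) →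
      FnL O K B V A L n = radL O K B V L n := by
    intro n hind
    refine le_antisymm (FnL_le_radL O K B V A L hLstab n) ?_
    -- decomposition from surjectivity
    have hdecomp : ∀ x ∈ radL O K B V L n,
        ∃ f ∈ FnL O K B V A L n ⊔ FnL O K B V A L (n + 1),
        ∃ y ∈ radL O K B V L n, x = f + π • y := by
      intro x hx
      obtain ⟨zq, hzq⟩ := (hbij n).2 (Submodule.Quotient.mk ⟨x, Submodule.mem_sup_left hx⟩)
      obtain ⟨w, rfl⟩ := Submodule.Quotient.mk_surjective _ zq
      rw [modPiMap, subQuotMap, Submodule.mapQ_apply] at hzq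
      have hdiff : ((w : V) - x) ∈ radL O K B V L (n + 1) ⊔ piSMul O V π L := by
        have h1 := (Submodule.Quotient.eq _).mp hzq
        simpa using h1
      obtain ⟨f, hf, p₁, hp₁, hw⟩ := Submodule.mem_sup.mp w.2
      obtain ⟨g, hg, p₂, hp₂, hwx⟩ := Submodule.mem_sup.mp hdiff
      obtain ⟨w₁, hw₁, rfl⟩ := Submodule.mem_map.mp hp₁
      obtain ⟨w₂, hw₂, rfl⟩ := Submodule.mem_map.mp hp₂
      rw [LinearMap.lsmul_apply] at hw hwx
      have hxeq : x = (f - g) + π • (w₁ - w₂) := by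
        rw [smul_sub]
        have : x = (f + π • w₁) - (g + π • w₂) := by rw [hw, hwx]; abel
        rw [this]; abel
      have hg' : g ∈ radL O K B V L n := hradL_succ_le n hg
      have hf' : f ∈ radL O K B V L n := FnL_le_radL O K B V A L hLstab n hf
      have hπy : π • (w₁ - w₂) ∈ radL O K B V L n := by
        have : π • (w₁ - w₂) = x - (f - g) := by rw [hxeq]; abel
        rw [this]
        exact sub_mem hx (sub_mem hf' hg')
      have hyV : (w₁ - w₂ : V) ∈ radV K B V n := by
        have h1 : (algebraMap O K π) • (w₁ - w₂) ∈ radV K B V n := by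
          rw [algebraMap_smul]
          exact hπy.2
        have hc : (algebraMap O K π) ≠ 0 := fun h =>
          hπ.ne_zero (IsFractionRing.injective O K (by rw [h, map_zero]))
        have h2 := Submodule.smul_mem _ (algebraMap O K π)⁻¹ h1
        rwa [inv_smul_smul₀ hc] at h2
      refine ⟨f - g, sub_mem (Submodule.mem_sup_left hf)
        (Submodule.mem_sup_right (hind ▸ hg)), w₁ - w₂,
        Submodule.mem_inf.mpr ⟨sub_mem hw₁ hw₂, hyV⟩, hxeq⟩
    -- Nakayama
    have hsup_le : FnL O K B V A L n ⊔ FnL O K B V A L (n + 1) ≤ radL O K B V L n :=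
      sup_le (FnL_le_radL O K B V A L hLstab n)
        (le_trans (le_of_eq hind) (hradL_succ_le n))
    have hnak := nakayama π hπ (FnL O K B V A L n ⊔ FnL O K B V A L (n + 1))
      (radL O K B V L n) hsup_le (hradfg n) hdecomp
    -- collapse the sup
    cases n with
    | zero =>
        exact le_trans (hradL_le_L 0 |>.trans (le_of_eq hradL0.symm) |>.trans
          (le_of_eq hzero.symm)) le_rfl
    | succ m =>
        have hmono : FnL O K B V A L (m + 2) ≤ FnL O K B V A L (m + 1) := by
          refine Submodule.span_mono ?_
          rintro y ⟨s, hs, v, hv, rfl⟩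
          obtain ⟨hs1, hs2⟩ := Submodule.mem_inf.mp hs
          exact ⟨s, Submodule.mem_inf.mpr ⟨hs1, JK_pow_succ_le K B m hs2⟩, v, hv, rfl⟩
        exact hnak.trans (sup_le le_rfl hmono)
  -- downward induction from nilpotency
  obtain ⟨N, hN⟩ := JK_nilpotent K B
  have hradbot : ∀ n, N + 1 ≤ n → radL O K B V L n = ⊥ := by
    intro n hn
    obtain ⟨c, rfl⟩ := Nat.le.dest hn
    have hV : radV K B V (N + 1 + c) = ⊥ := by
      refine le_bot_iff.mp (le_trans (radV_add_le K B V (N + 1) c) ?_)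
      rw [radV]
      refine Submodule.span_le.mpr ?_
      rintro y ⟨s, hs, v, _, rfl⟩
      have hs0 : s = 0 := by rw [hN] at hs; simpa using hs
      rw [hs0, zero_smul]
      exact Submodule.zero_mem ⊥
    rw [radL, hV]
    simp
  have hmain : ∀ m n : ℕ, N + 1 ≤ n + m → FnL O K B V A L n = radL O K B V L n := by
    intro m
    induction m with
    | zero =>
        intro n hn
        rw [hradbot n (by omega)]
        rw [← le_bot_iff]
        exact le_trans (FnL_le_radL O K B V A L hLstab n) (le_of_eq (hradbot n (by omega)))
    | succ m ih =>
        intro n hn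
        exact hstep n (ih (n + 1) (by omega))
  exact fun n => hmain (N + 1) n (by omega)

end
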